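/- arXiv:1503.02232 — 2 statements merged into one kernel-verified Lean document; each statement's English description precedes it below -/
import Mathlib

section
/- Let A(y) = h(y)/(|Jac T(y)| h(Ty)), so that Σ_{Ty=x} A(y) = 1 with A(y) > 0. Suppose ψ̄: 𝕋^d → ℂ is continuous, θ: 𝕋^d → ℝ is continuous, and Σ_{Ty=x} A(y) e^{iθ(y)} ψ̄(y) = ψ̄(x) for all x. If T is topologically mixing (so backward orbits are dense) and |ψ̄| attains its maximum, then |ψ̄| is constant on 𝕋^d, and moreover e^{iθ(y)} ψ̄(y) = ψ̄(Ty) for all y. -/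
/-!
Write `v y = e^{iθ(y)} ψ(y)`, so `‖v‖ = ‖ψ‖` and `ψ(x)` is a convex combination of the values `v(y)`,
`Ty = x`. At a point `x` where `‖ψ‖` is maximal, the identity
`∑ A(y) ‖v(y) - ψ(x)‖² = ∑ A(y) ‖v(y)‖² - ‖ψ(x)‖² ≤ 0` forces `v(y) = ψ(x)` for every preimage `y`,
so `‖ψ(y)‖` is maximal as well. Hence the maximum level set is backward invariant; it contains the
dense backward orbit of a maximum point and is closed, so it is everything.
-/

open Finset

theorem sum_mul_norm_sub_sum_smul_sq {ι E : Type*} [NormedAddCommGroup E] [InnerProductSpace ℝ E]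
    (t : Finset ι) (w : ι → ℝ) (v : ι → E) (hw : ∑ i ∈ t, w i = 1) :
    ∑ i ∈ t, w i * ‖v i - ∑ j ∈ t, w j • v j‖ ^ 2 =
      ∑ i ∈ t, w i * ‖v i‖ ^ 2 - ‖∑ j ∈ t, w j • v j‖ ^ 2 := by
  set p := ∑ j ∈ t, w j • v j
  have hinner : ∑ i ∈ t, w i * (2 * inner ℝ (v i) p) = 2 * ‖p‖ ^ 2 := by
    rw [← real_inner_self_eq_norm_sq, sum_inner, mul_sum]
    refine sum_congr rfl fun i _ => ?_
    rw [real_inner_smul_left]; ring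
  simp_rw [norm_sub_sq_real, mul_add, mul_sub, sum_add_distrib, sum_sub_distrib, ← sum_mul, hw,
    hinner]
  ring

theorem eq_sum_smul_of_norm_le_norm_sum_smul {ι E : Type*} [NormedAddCommGroup E]
    [InnerProductSpace ℝ E] {t : Finset ι} {w : ι → ℝ} {v : ι → E} (hw₀ : ∀ i ∈ t, 0 < w i)
    (hw₁ : ∑ i ∈ t, w i = 1) (hv : ∀ i ∈ t, ‖v i‖ ≤ ‖∑ j ∈ t, w j • v j‖) :
    ∀ i ∈ t, v i = ∑ j ∈ t, w j • v j := by
  set p := ∑ j ∈ t, w j • v j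
  have hnonneg : ∀ i ∈ t, 0 ≤ w i * ‖v i - p‖ ^ 2 := fun i hi => by
    have := hw₀ i hi; positivity
  have hsum : ∑ i ∈ t, w i * ‖v i - p‖ ^ 2 = 0 := by
    refine le_antisymm ?_ (sum_nonneg hnonneg)
    calc ∑ i ∈ t, w i * ‖v i - p‖ ^ 2 = ∑ i ∈ t, w i * ‖v i‖ ^ 2 - ‖p‖ ^ 2 :=
          sum_mul_norm_sub_sum_smul_sq t w v hw₁
      _ ≤ ∑ i ∈ t, w i * ‖p‖ ^ 2 - ‖p‖ ^ 2 := by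
          gcongr with i hi
          · exact (hw₀ i hi).le
          · exact hv i hi
      _ = 0 := by rw [← sum_mul, hw₁, one_mul, sub_self]
  intro i hi
  have := (sum_eq_zero_iff_of_nonneg hnonneg).1 hsum i hi
  simpa [(hw₀ i hi).ne', sub_eq_zero] using this

theorem Set.Finite.eq_of_finsum_mem_smul_eq_of_norm_le {ι E : Type*} [NormedAddCommGroup E]
    [InnerProductSpace ℝ E] {s : Set ι} (hs : s.Finite) {w : ι → ℝ} {v : ι → E} {p : E}
    (hw₀ : ∀ i ∈ s, 0 < w i) (hw₁ : ∑ᶠ i ∈ s, w i = 1) (hp : ∑ᶠ i ∈ s, w i • v i = p)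
    (hv : ∀ i ∈ s, ‖v i‖ ≤ ‖p‖) {i : ι} (hi : i ∈ s) : v i = p := by
  rw [finsum_mem_eq_finite_toFinset_sum _ hs] at hw₁ hp
  subst hp
  exact eq_sum_smul_of_norm_le_norm_sum_smul (by simpa using hw₀) hw₁ (by simpa using hv) i
    (hs.mem_toFinset.2 hi)

section TwistedAverage

variable {X E : Type*} [NormedAddCommGroup E] [InnerProductSpace ℝ E] {T : X → X} {A : X → ℝ}
  {v ψ : X → E}

theorem apply_eq_of_norm_map_eq_max (hfin : ∀ x, (T ⁻¹' {x}).Finite) (hA₀ : ∀ y, 0 < A y)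
    (hA₁ : ∀ x, ∑ᶠ y ∈ T ⁻¹' {x}, A y = 1) (heq : ∀ x, ∑ᶠ y ∈ T ⁻¹' {x}, A y • v y = ψ x)
    (hv : ∀ y, ‖v y‖ = ‖ψ y‖) {z : X} (hz : ∀ x, ‖ψ x‖ ≤ ‖ψ z‖) (y : X)
    (hy : ‖ψ (T y)‖ = ‖ψ z‖) : v y = ψ (T y) :=
  (hfin (T y)).eq_of_finsum_mem_smul_eq_of_norm_le (fun y _ => hA₀ y) (hA₁ (T y)) (heq (T y))
    (fun y' _ => hy ▸ (hv y').trans_le (hz y')) rfl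

theorem norm_eq_of_dense_backward_orbit [TopologicalSpace X] (hfin : ∀ x, (T ⁻¹' {x}).Finite)
    (hA₀ : ∀ y, 0 < A y) (hA₁ : ∀ x, ∑ᶠ y ∈ T ⁻¹' {x}, A y = 1)
    (heq : ∀ x, ∑ᶠ y ∈ T ⁻¹' {x}, A y • v y = ψ x) (hv : ∀ y, ‖v y‖ = ‖ψ y‖)
    (hψ : Continuous ψ) {z : X} (hz : ∀ x, ‖ψ x‖ ≤ ‖ψ z‖)
    (hdense : Dense {y : X | ∃ n : ℕ, 0 < n ∧ T^[n] y = z}) (x : X) : ‖ψ x‖ = ‖ψ z‖ := by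
  have hnonmax : Set.MapsTo T {y | ‖ψ y‖ ≠ ‖ψ z‖} {y | ‖ψ y‖ ≠ ‖ψ z‖} := fun y hy hTy =>
    hy <| by rw [← hv, apply_eq_of_norm_map_eq_max hfin hA₀ hA₁ heq hv hz y hTy, hTy]
  have hbackorbit : Set.EqOn (‖ψ ·‖) (fun _ => ‖ψ z‖) {y | ∃ n, 0 < n ∧ T^[n] y = z} := by
    rintro y ⟨n, -, rfl⟩
    by_contra hy
    exact hnonmax.iterate n hy rfl
  exact congrFun (Continuous.ext_on hdense hψ.norm continuous_const hbackorbit) x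

end TwistedAverage

theorem stmt_3_general {X : Type*} [TopologicalSpace X] (T : X → X)
    (hfin : ∀ x, (T ⁻¹' {x}).Finite)
    (A : X → ℝ) (hApos : ∀ y, 0 < A y)
    (hAsum : ∀ x, ∑ᶠ y ∈ T ⁻¹' {x}, A y = 1)
    (ψ : X → ℂ) (hψ : Continuous ψ)
    (θ : X → ℝ)
    (heq : ∀ x, ∑ᶠ y ∈ T ⁻¹' {x},
        (A y : ℂ) * Complex.exp (Complex.I * (θ y : ℂ)) * ψ y = ψ x)
    (hmix : ∀ z : X, Dense {y : X | ∃ n : ℕ, 0 < n ∧ T^[n] y = z})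
    (hmax : ∃ z : X, ∀ x, ‖ψ x‖ ≤ ‖ψ z‖) :
    (∀ x x' : X, ‖ψ x‖ = ‖ψ x'‖) ∧
      (∀ y : X, Complex.exp (Complex.I * (θ y : ℂ)) * ψ y = ψ (T y)) := by
  obtain ⟨z, hz⟩ := hmax
  set v : X → ℂ := fun y => Complex.exp (Complex.I * (θ y : ℂ)) * ψ y
  have hv : ∀ y, ‖v y‖ = ‖ψ y‖ := fun y => by
    simp [v, Complex.norm_exp]
  have heq' : ∀ x, ∑ᶠ y ∈ T ⁻¹' {x}, A y • v y = ψ x := fun x => by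
    simpa only [v, Complex.real_smul, mul_assoc] using heq x
  have hconst := norm_eq_of_dense_backward_orbit hfin hApos hAsum heq' hv hψ hz (hmix z)
  exact ⟨fun x x' => (hconst x).trans (hconst x').symm,
    fun y => apply_eq_of_norm_map_eq_max hfin hApos hAsum heq' hv hz y (hconst (T y))⟩

/-- maximum principle for the twisted averaging equation
`Σ_{Ty=x} A(y) e^{iθ(y)} ψ̄(y) = ψ̄(x)`: if backward orbits are dense and `|ψ̄|` attains its
maximum, then `|ψ̄|` is constant and `e^{iθ(y)} ψ̄(y) = ψ̄(Ty)` for all `y`. -/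
theorem stmt_3 {X : Type*} [TopologicalSpace X] (T : X → X)
    (hfin : ∀ x, (T ⁻¹' {x}).Finite)
    (A : X → ℝ) (hApos : ∀ y, 0 < A y)
    (hAsum : ∀ x, ∑ᶠ y ∈ T ⁻¹' {x}, A y = 1)
    (ψ : X → ℂ) (hψ : Continuous ψ)
    (θ : X → ℝ) (hθ : Continuous θ)
    (heq : ∀ x, ∑ᶠ y ∈ T ⁻¹' {x},
        (A y : ℂ) * Complex.exp (Complex.I * (θ y : ℂ)) * ψ y = ψ x)
    (hmix : ∀ z : X, Dense {y : X | ∃ n : ℕ, 0 < n ∧ T^[n] y = z})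
    (hmax : ∃ z : X, ∀ x, ‖ψ x‖ ≤ ‖ψ z‖) :
    (∀ x x' : X, ‖ψ x‖ = ‖ψ x'‖) ∧
      (∀ y : X, Complex.exp (Complex.I * (θ y : ℂ)) * ψ y = ψ (T y)) :=
  stmt_3_general T hfin A hApos hAsum ψ hψ θ heq hmix hmax
end

section
/- Suppose V: 𝕋^d → ℝ^d is a C¹ vector field satisfying (D_xT)^t V(Tx) = V(x) + (D_xτ)^t n* for all x, where T is smooth expanding and τ ∈ C^∞(𝕋^d, ℝ^ℓ), n* ∈ ℝ^ℓ, and suppose the 1-form V(x)·dx is exact, with potential u(x) = ∫_{Γ_{0,x}} V(z)·dz. Then n*·τ(x) = c − u(x) + u(Tx) for all x ∈ 𝕋^d, where c = n*·τ(0) − u(T0); that is, n*·τ is a coboundary over T up to the constant c. -/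
/-!
Differentiate the cocycle relation: by the chain rule, `(D_xT)^t V(Tx)` is the gradient of
`u ∘ T` and `(D_xτ)^t n*` that of `⟪n*, τ⟫`, so `u ∘ T - u - ⟪n*, τ⟫` has zero gradient and is
therefore constant; its value at `0` is `u(T0) - ⟪n*, τ(0)⟫` because `u(0) = 0`.
-/

open scoped RealInnerProductSpace

section Gradient

variable {E F : Type*} [NormedAddCommGroup E] [InnerProductSpace ℝ E] [CompleteSpace E]
  [NormedAddCommGroup F] [InnerProductSpace ℝ F] [CompleteSpace F]

theorem InnerProductSpace.toDual_adjoint (A : E →L[ℝ] F) (w : F) :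
    (toDual ℝ E (ContinuousLinearMap.adjoint A w) : E →L[ℝ] ℝ) =
      (toDual ℝ F w : F →L[ℝ] ℝ).comp A := by
  ext v
  simp [ContinuousLinearMap.adjoint_inner_left]

theorem HasGradientAt.comp_hasFDerivAt {u : F → ℝ} {g : E → F} {A : E →L[ℝ] F} {w : F} {x : E}
    (hu : HasGradientAt u w (g x)) (hg : HasFDerivAt g A x) :
    HasGradientAt (fun y => u (g y)) (ContinuousLinearMap.adjoint A w) x := by
  rw [hasGradientAt_iff_hasFDerivAt, InnerProductSpace.toDual_adjoint]
  exact hu.hasFDerivAt.comp x hg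

theorem HasFDerivAt.hasGradientAt_inner {τ : E → F} {B : E →L[ℝ] F} {x : E}
    (hτ : HasFDerivAt τ B x) (n : F) :
    HasGradientAt (fun y => ⟪n, τ y⟫) (ContinuousLinearMap.adjoint B n) x := by
  rw [hasGradientAt_iff_hasFDerivAt, InnerProductSpace.toDual_adjoint]
  exact (innerSL ℝ n).hasFDerivAt.comp x hτ

theorem HasGradientAt.sub {f g : E → ℝ} {a b x : E} (hf : HasGradientAt f a x)
    (hg : HasGradientAt g b x) : HasGradientAt (fun y => f y - g y) (a - b) x := by
  rw [hasGradientAt_iff_hasFDerivAt, map_sub]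
  exact hf.hasFDerivAt.sub hg.hasFDerivAt

theorem is_const_of_hasGradientAt_zero {f : E → ℝ} (hf : ∀ x, HasGradientAt f 0 x) (x y : E) :
    f x = f y := by
  have hf' : ∀ x, HasFDerivAt f (0 : E →L[ℝ] ℝ) x := fun x => by
    simpa using (hf x).hasFDerivAt
  exact is_const_of_fderiv_eq_zero (fun z => (hf' z).differentiableAt)
    (fun z => (hf' z).fderiv) x y

end Gradient

theorem stmt_11_general {d ℓ : ℕ}
    (T : EuclideanSpace ℝ (Fin d) → EuclideanSpace ℝ (Fin d))
    (τ : EuclideanSpace ℝ (Fin d) → EuclideanSpace ℝ (Fin ℓ))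
    (DT : EuclideanSpace ℝ (Fin d) → (EuclideanSpace ℝ (Fin d) →L[ℝ] EuclideanSpace ℝ (Fin d)))
    (Dτ : EuclideanSpace ℝ (Fin d) → (EuclideanSpace ℝ (Fin d) →L[ℝ] EuclideanSpace ℝ (Fin ℓ)))
    (hT : ∀ x, HasFDerivAt T (DT x) x) (hτ : ∀ x, HasFDerivAt τ (Dτ x) x)
    (nstar : EuclideanSpace ℝ (Fin ℓ))
    (V : EuclideanSpace ℝ (Fin d) → EuclideanSpace ℝ (Fin d))
    (u : EuclideanSpace ℝ (Fin d) → ℝ)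
    (hgrad : ∀ x, HasGradientAt u (V x) x) (hu0 : u 0 = 0)
    (hcocycle : ∀ x, (ContinuousLinearMap.adjoint (DT x)) (V (T x)) =
        V x + (ContinuousLinearMap.adjoint (Dτ x)) nstar) :
    ∀ x, (inner ℝ nstar (τ x) : ℝ) = ((inner ℝ nstar (τ 0) : ℝ) - u (T 0)) - u x + u (T x) := by
  have hzero : ∀ x, HasGradientAt (fun y => u (T y) - u y - ⟪nstar, τ y⟫) 0 x := fun x => by
    have h := (((hgrad (T x)).comp_hasFDerivAt (hT x)).sub (hgrad x)).sub
      ((hτ x).hasGradientAt_inner nstar)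
    rwa [hcocycle x, add_sub_cancel_left, sub_self] at h
  intro x
  have hx := is_const_of_hasGradientAt_zero hzero x 0
  rw [hu0] at hx
  linarith

/-- if the C¹ vector field `V` satisfies the cocycle relation
`(D_xT)^t V(Tx) = V(x) + (D_xτ)^t n*` and the 1-form `V·dx` is exact with potential `u`
(normalized by `u(0)=0`), then `n*·τ(x) = c − u(x) + u(Tx)` with `c = n*·τ(0) − u(T0)`. -/
theorem stmt_11 {d ℓ : ℕ}
    (T : EuclideanSpace ℝ (Fin d) → EuclideanSpace ℝ (Fin d))
    (τ : EuclideanSpace ℝ (Fin d) → EuclideanSpace ℝ (Fin ℓ))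
    (DT : EuclideanSpace ℝ (Fin d) → (EuclideanSpace ℝ (Fin d) →L[ℝ] EuclideanSpace ℝ (Fin d)))
    (Dτ : EuclideanSpace ℝ (Fin d) → (EuclideanSpace ℝ (Fin d) →L[ℝ] EuclideanSpace ℝ (Fin ℓ)))
    (hT : ∀ x, HasFDerivAt T (DT x) x) (hτ : ∀ x, HasFDerivAt τ (Dτ x) x)
    (nstar : EuclideanSpace ℝ (Fin ℓ))
    (V : EuclideanSpace ℝ (Fin d) → EuclideanSpace ℝ (Fin d)) (hV : Continuous V)
    (u : EuclideanSpace ℝ (Fin d) → ℝ)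
    (hgrad : ∀ x, HasGradientAt u (V x) x) (hu0 : u 0 = 0)
    (hcocycle : ∀ x, (ContinuousLinearMap.adjoint (DT x)) (V (T x)) =
        V x + (ContinuousLinearMap.adjoint (Dτ x)) nstar) :
    ∀ x, (inner ℝ nstar (τ x) : ℝ) = ((inner ℝ nstar (τ 0) : ℝ) - u (T 0)) - u x + u (T x) :=
  stmt_11_general T τ DT Dτ hT hτ nstar V u hgrad hu0 hcocycle
end
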